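/- Let x : I → ℝ² be C² with |x_ρ| > 0, suppose x(ρ₀)·e₁ = 0 and ν(ρ₀)·e₁ = 0 at an axis point ρ₀, where ν = −(x_ρ/|x_ρ|)^⊥. Then the limit of (ν·e₁)/(x·e₁) as ρ → ρ₀ exists and equals −κ(ρ₀), where κ is the curvature of the curve, i.e. lim_{ρ→ρ₀} (ν(ρ)·e₁)/(x(ρ)·e₁) = ν_s(ρ₀)·τ(ρ₀) = −κ(ρ₀). -/

import Mathlib

/-! Both `ν·e₁` and `x·e₁` vanish at `ρ₀`, so their quotient tends to the quotient of their
derivatives. The Frenet relation `ν_ρ = −|x_ρ| κ τ` makes the numerator's derivative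
`−κ (x_ρ·e₁)`, and `x_ρ·e₁ ≠ 0` because `ν·e₁ = 0` forces `x_ρ` to be horizontal. -/

/-- Euclidean norm on `ℝ²` (represented as `ℝ × ℝ`). -/
noncomputable def enorm2 (v : ℝ × ℝ) : ℝ := Real.sqrt (v.1 ^ 2 + v.2 ^ 2)

/-- Clockwise rotation by `π/2`. -/
def perp2 (v : ℝ × ℝ) : ℝ × ℝ := (v.2, -v.1)

/-- Unit tangent `τ = x_ρ / |x_ρ|`. -/
noncomputable def unitTangent (x : ℝ → ℝ × ℝ) (ρ : ℝ) : ℝ × ℝ :=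
  (enorm2 (deriv x ρ))⁻¹ • deriv x ρ

/-- Unit normal `ν = −τ^⊥`. -/
noncomputable def normalVec (x : ℝ → ℝ × ℝ) (ρ : ℝ) : ℝ × ℝ :=
  - perp2 (unitTangent x ρ)

/-- Euclidean dot product on `ℝ²`. -/
def dot2 (a b : ℝ × ℝ) : ℝ := a.1 * b.1 + a.2 * b.2

open Filter Topology

theorem tendsto_div_nhdsNE_of_hasDerivAt {𝕜 : Type*} [NontriviallyNormedField 𝕜]
    {f g : 𝕜 → 𝕜} {f' g' a : 𝕜} (hf : HasDerivAt f f' a) (hg : HasDerivAt g g' a)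
    (hfa : f a = 0) (hga : g a = 0) (hg' : g' ≠ 0) :
    Tendsto (fun x => f x / g x) (𝓝[≠] a) (𝓝 (f' / g')) := by
  refine ((hasDerivAt_iff_tendsto_slope.1 hf).div (hasDerivAt_iff_tendsto_slope.1 hg) hg').congr' ?_
  filter_upwards [self_mem_nhdsWithin] with x hx
  rw [Pi.div_apply, slope_def_field, slope_def_field, hfa, hga, sub_zero, sub_zero,
    div_div_div_cancel_right₀ (sub_ne_zero.2 hx)]

section ProdDeriv

variable {𝕜 E F : Type*} [NontriviallyNormedField 𝕜] [NormedAddCommGroup E] [NormedSpace 𝕜 E]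
  [NormedAddCommGroup F] [NormedSpace 𝕜 F] {f : 𝕜 → E × F} {f' : E × F} {a : 𝕜}

theorem HasDerivAt.fst (hf : HasDerivAt f f' a) : HasDerivAt (fun y => (f y).1) f'.1 a :=
  (ContinuousLinearMap.fst 𝕜 E F).hasFDerivAt.comp_hasDerivAt a hf

theorem HasDerivAt.snd (hf : HasDerivAt f f' a) : HasDerivAt (fun y => (f y).2) f'.2 a :=
  (ContinuousLinearMap.snd 𝕜 E F).hasFDerivAt.comp_hasDerivAt a hf

end ProdDeriv

theorem perp2_neg (v : ℝ × ℝ) : perp2 (-v) = -perp2 v := rfl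

theorem perp2_perp2 (v : ℝ × ℝ) : perp2 (perp2 v) = -v := rfl

theorem perp2_smul (c : ℝ) (v : ℝ × ℝ) : perp2 (c • v) = c • perp2 v := by
  simp [perp2]

theorem HasDerivAt.perp2 {f : ℝ → ℝ × ℝ} {f' : ℝ × ℝ} {ρ : ℝ} (hf : HasDerivAt f f' ρ) :
    HasDerivAt (fun σ => perp2 (f σ)) (perp2 f') ρ :=
  hf.snd.prodMk hf.fst.neg

theorem dot2_smul_left (c : ℝ) (a b : ℝ × ℝ) : dot2 (c • a) b = c * dot2 a b := by
  simp only [dot2, Prod.smul_fst, Prod.smul_snd, smul_eq_mul]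
  ring

theorem dot2_smul_right (c : ℝ) (a b : ℝ × ℝ) : dot2 a (c • b) = c * dot2 a b := by
  simp only [dot2, Prod.smul_fst, Prod.smul_snd, smul_eq_mul]
  ring

theorem enorm2_sq (v : ℝ × ℝ) : enorm2 v ^ 2 = dot2 v v := by
  rw [enorm2, Real.sq_sqrt (by positivity), dot2]
  ring

theorem DifferentiableAt.enorm2 {v : ℝ → ℝ × ℝ} {ρ : ℝ} (hv : DifferentiableAt ℝ v ρ)
    (h : enorm2 (v ρ) ≠ 0) : DifferentiableAt ℝ (fun σ => enorm2 (v σ)) ρ :=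
  ((hv.fst.pow 2).add (hv.snd.pow 2)).sqrt fun h0 => h (by
    simp only [Pi.add_apply, Pi.pow_apply] at h0
    rw [_root_.enorm2, h0, Real.sqrt_zero])

section UnitTangent

variable {x : ℝ → ℝ × ℝ} {ρ : ℝ}

theorem differentiableAt_unitTangent (hx : DifferentiableAt ℝ (deriv x) ρ)
    (hreg : enorm2 (deriv x ρ) ≠ 0) : DifferentiableAt ℝ (unitTangent x) ρ :=
  ((hx.enorm2 hreg).inv hreg).smul hx

theorem enorm2_smul_unitTangent (hreg : enorm2 (deriv x ρ) ≠ 0) :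
    enorm2 (deriv x ρ) • unitTangent x ρ = deriv x ρ :=
  smul_inv_smul₀ hreg _

theorem dot2_unitTangent_self (hreg : enorm2 (deriv x ρ) ≠ 0) :
    dot2 (unitTangent x ρ) (unitTangent x ρ) = 1 := by
  rw [unitTangent, dot2_smul_left, dot2_smul_right, ← enorm2_sq]
  field_simp

theorem perp2_normalVec : perp2 (normalVec x ρ) = unitTangent x ρ := by
  rw [normalVec, perp2_neg, perp2_perp2, neg_neg]

theorem fst_deriv_ne_zero_of_normalVec_fst_eq_zero (hreg : enorm2 (deriv x ρ) ≠ 0)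
    (hν : (normalVec x ρ).1 = 0) : (deriv x ρ).1 ≠ 0 := by
  intro h1
  have h2 : (deriv x ρ).2 = 0 := by
    simpa [normalVec, perp2, unitTangent, hreg] using hν
  exact hreg (by simp [enorm2, h1, h2])

/-- The Frenet relation `ν_s = −κ τ`, written with `∂_s = |x_ρ|⁻¹ ∂_ρ`. -/
theorem hasDerivAt_normalVec {κ : ℝ} (hx : DifferentiableAt ℝ (deriv x) ρ)
    (hreg : enorm2 (deriv x ρ) ≠ 0)
    (hκ : κ • normalVec x ρ = (enorm2 (deriv x ρ))⁻¹ • deriv (unitTangent x) ρ) :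
    HasDerivAt (normalVec x) (-(enorm2 (deriv x ρ) * κ) • unitTangent x ρ) ρ := by
  have hτ' : deriv (unitTangent x) ρ = (enorm2 (deriv x ρ) * κ) • normalVec x ρ := by
    rw [mul_smul, hκ, smul_inv_smul₀ hreg]
  have h := (differentiableAt_unitTangent hx hreg).hasDerivAt.perp2.neg
  rwa [hτ', perp2_smul, perp2_normalVec, ← neg_smul] at h

end UnitTangent

/-- At an axis point `ρ₀` with `x(ρ₀)·e₁ = 0` and `ν(ρ₀)·e₁ = 0`, one has
`ν_s(ρ₀)·τ(ρ₀) = −κ(ρ₀)` and `lim_{ρ→ρ₀} (ν·e₁)/(x·e₁) = −κ(ρ₀)`,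
where `κ` is the curvature defined by `κ ν = τ_s`. -/
theorem axis_limit_curvature (x : ℝ → ℝ × ℝ) (κ : ℝ → ℝ) (ρ₀ : ℝ)
    (hx : ContDiff ℝ 2 x)
    (hreg : ∀ ρ, 0 < enorm2 (deriv x ρ))
    (haxis : (x ρ₀).1 = 0)
    (hν : (normalVec x ρ₀).1 = 0)
    (hκ : ∀ ρ, κ ρ • normalVec x ρ =
      (enorm2 (deriv x ρ))⁻¹ • deriv (fun σ => unitTangent x σ) ρ) :
    dot2 ((enorm2 (deriv x ρ₀))⁻¹ • deriv (fun σ => normalVec x σ) ρ₀)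
        (unitTangent x ρ₀) = -κ ρ₀
    ∧ Filter.Tendsto (fun ρ => (normalVec x ρ).1 / (x ρ).1)
        (nhdsWithin ρ₀ {ρ₀}ᶜ) (nhds (-κ ρ₀)) := by
  have hn : enorm2 (deriv x ρ₀) ≠ 0 := (hreg ρ₀).ne'
  have hdx : Differentiable ℝ (deriv x) :=
    ((contDiff_succ_iff_deriv (n := 1)).1 hx).2.2.differentiable one_ne_zero
  have hν' := hasDerivAt_normalVec (hdx ρ₀) hn (hκ ρ₀)
  refine ⟨?_, ?_⟩
  · rw [hν'.deriv, smul_smul, dot2_smul_left, dot2_unitTangent_self hn]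
    field_simp
  · have hx₁ : HasDerivAt (fun ρ => (x ρ).1) (deriv x ρ₀).1 ρ₀ :=
      (hx.differentiable two_ne_zero ρ₀).hasDerivAt.fst
    have hν₁ : HasDerivAt (fun ρ => (normalVec x ρ).1) (-κ ρ₀ * (deriv x ρ₀).1) ρ₀ := by
      have hval : (-(enorm2 (deriv x ρ₀) * κ ρ₀) • unitTangent x ρ₀).1
          = -κ ρ₀ * (deriv x ρ₀).1 := by
        conv_rhs => rw [← enorm2_smul_unitTangent hn]
        simp only [Prod.smul_fst, smul_eq_mul]
        ring
      exact hval ▸ hν'.fst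
    have hx'₁ := fst_deriv_ne_zero_of_normalVec_fst_eq_zero hn hν
    have h := tendsto_div_nhdsNE_of_hasDerivAt hν₁ hx₁ hν haxis hx'₁
    rwa [mul_div_cancel_right₀ _ hx'₁] at h
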